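/- arXiv:math/0404039 — 4 statements merged into one kernel-verified Lean document; each statement's English description precedes it below -/
import Mathlib

section
/- Let 0 < A, D < 1 and 0 < p < 1, and define r_m = D^m · A^{(m−1) + ∑_{j=1}^{m−1}(m−j) j^{−1+p}} for m ≥ 1 (with the empty sum equal to 0 for m = 1). Then there exists a constant L > 0, independent of p, such that log(1/r_m) ≤ m log(1/D) + log(1/A) · L m^{1+p} / (p(p+1)) for all m ≥ 1. -/
/-! By concavity of `t ↦ t ^ p`, `p * j ^ (p - 1) ≤ j ^ p - (j - 1) ^ p`, so the sum
`∑_{j < m} (m - j) j ^ (p - 1)` telescopes to at most `m ^ (1 + p) / p`. Hence the exponent of `A`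
in `r_m` is at most `m ^ (1 + p) (p + 1) / p ≤ 4 m ^ (1 + p) / (p (p + 1))`, and taking logarithms
gives the bound with `L = 4`. -/

open Real Finset

/-- Bernoulli's inequality `(1 - t) ^ p ≤ 1 - p t` at `t = 1 / (a + 1)`, multiplied by `(a + 1) ^ p`. -/
lemma mul_add_one_rpow_sub_one_le_add_one_rpow_sub_rpow {p : ℝ} (hp0 : 0 ≤ p) (hp1 : p ≤ 1)
    {a : ℝ} (ha : 0 ≤ a) : p * (a + 1) ^ (p - 1) ≤ (a + 1) ^ p - a ^ p := by
  have ha1 : 0 < a + 1 := by linarith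
  have hs : -1 ≤ -(1 / (a + 1)) := neg_le_neg (div_le_one_of_le₀ (by linarith) ha1.le)
  have bernoulli := rpow_one_add_le_one_add_mul_self hs hp0 hp1
  have hbase : 1 + -(1 / (a + 1)) = a / (a + 1) := by field_simp; ring
  rw [hbase, div_rpow ha ha1.le, div_le_iff₀ (rpow_pos_of_pos ha1 p)] at bernoulli
  have hpow : (a + 1) ^ p = (a + 1) ^ (p - 1) * (a + 1) := by
    rw [← rpow_add_one ha1.ne', sub_add_cancel]
  rw [hpow] at bernoulli ⊢
  have : (1 + p * -(1 / (a + 1))) * ((a + 1) ^ (p - 1) * (a + 1))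
      = (a + 1) ^ (p - 1) * (a + 1) - p * (a + 1) ^ (p - 1) := by field_simp; ring
  linarith

lemma sum_Icc_rpow_sub_one_le {p : ℝ} (hp0 : 0 < p) (hp1 : p ≤ 1) (n : ℕ) :
    ∑ j ∈ Icc 1 n, (j : ℝ) ^ (p - 1) ≤ (n : ℝ) ^ p / p := by
  induction n with
  | zero => simp [zero_rpow hp0.ne']
  | succ n ih =>
    have step := mul_add_one_rpow_sub_one_le_add_one_rpow_sub_rpow hp0.le hp1 n.cast_nonneg
    rw [← le_div_iff₀' hp0] at step
    rw [sum_Icc_succ_top (by omega), Nat.cast_succ]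
    calc _ ≤ (n : ℝ) ^ p / p + (((n : ℝ) + 1) ^ p - (n : ℝ) ^ p) / p := add_le_add ih step
      _ = ((n : ℝ) + 1) ^ p / p := by ring

lemma sum_Icc_sub_mul_rpow_sub_one_le {p : ℝ} (hp0 : 0 < p) (hp1 : p ≤ 1) (m : ℕ) :
    ∑ j ∈ Icc 1 (m - 1), ((m : ℝ) - j) * (j : ℝ) ^ (p - 1) ≤ (m : ℝ) ^ (1 + p) / p := by
  calc ∑ j ∈ Icc 1 (m - 1), ((m : ℝ) - j) * (j : ℝ) ^ (p - 1)
      ≤ ∑ j ∈ Icc 1 (m - 1), (m : ℝ) * (j : ℝ) ^ (p - 1) := by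
        gcongr with j
        exact sub_le_self _ j.cast_nonneg
    _ ≤ m * (((m - 1 : ℕ) : ℝ) ^ p / p) := by
        rw [← mul_sum]
        exact mul_le_mul_of_nonneg_left (sum_Icc_rpow_sub_one_le hp0 hp1 _) m.cast_nonneg
    _ ≤ m * ((m : ℝ) ^ p / p) := by
        gcongr
        exact_mod_cast m.sub_le 1
    _ = (m : ℝ) ^ (1 + p) / p := by
        rw [rpow_add' m.cast_nonneg (by linarith), rpow_one, mul_div_assoc]

lemma sub_one_add_sum_Icc_sub_mul_rpow_sub_one_le {p : ℝ} (hp0 : 0 < p) (hp1 : p ≤ 1)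
    {m : ℕ} (hm : 1 ≤ m) :
    (m : ℝ) - 1 + ∑ j ∈ Icc 1 (m - 1), ((m : ℝ) - j) * (j : ℝ) ^ (p - 1)
      ≤ 4 * (m : ℝ) ^ (1 + p) / (p * (p + 1)) := by
  set T := (m : ℝ) ^ (1 + p)
  have hT : (m : ℝ) ≤ T := self_le_rpow_of_one_le (by exact_mod_cast hm) (by linarith)
  calc (m : ℝ) - 1 + ∑ j ∈ Icc 1 (m - 1), ((m : ℝ) - j) * (j : ℝ) ^ (p - 1)
      ≤ T + T / p := by linarith [sum_Icc_sub_mul_rpow_sub_one_le hp0 hp1 m]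
    _ = T * (p + 1) ^ 2 / (p * (p + 1)) := by field_simp
    _ ≤ 4 * T / (p * (p + 1)) := by
        have hT0 : 0 ≤ T := by linarith [m.cast_nonneg (α := ℝ)]
        have hsq : (p + 1) ^ 2 ≤ 4 := by nlinarith
        exact div_le_div_of_nonneg_right (by linarith [mul_le_mul_of_nonneg_left hsq hT0])
          (by positivity)

lemma log_one_div_pow_mul_rpow {A D : ℝ} (hA : 0 < A) (hD : D ≠ 0) (m : ℕ) (x : ℝ) :
    log (1 / (D ^ m * A ^ x)) = m * log (1 / D) + x * log (1 / A) := by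
  simp only [one_div, log_inv, log_mul (pow_ne_zero m hD) (rpow_pos_of_pos hA x).ne', log_pow,
    log_rpow hA]
  ring

theorem stmt_6_general (A D : ℝ) (hA : 0 < A) (hA1 : A < 1) (hD : 0 < D) :
    ∃ L > (0:ℝ), ∀ p : ℝ, 0 < p → p < 1 → ∀ m : ℕ, 1 ≤ m →
      Real.log (1 / (D ^ m *
          A ^ (((m:ℝ) - 1) + ∑ j ∈ Finset.Icc 1 (m - 1), ((m:ℝ) - (j:ℝ)) * (j:ℝ) ^ (-1 + p))))
        ≤ (m:ℝ) * Real.log (1 / D) +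
          Real.log (1 / A) * (L * (m:ℝ) ^ (1 + p) / (p * (p + 1))) := by
  refine ⟨4, by norm_num, fun p hp0 hp1 m hm => ?_⟩
  have hlogA : 0 ≤ log (1 / A) := by
    rw [one_div, log_inv]
    exact neg_nonneg.2 (log_nonpos hA.le hA1.le)
  rw [log_one_div_pow_mul_rpow hA hD.ne', mul_comm _ (log (1 / A)), neg_add_eq_sub]
  gcongr
  exact sub_one_add_sum_Icc_sub_mul_rpow_sub_one_le hp0 hp1.le hm

theorem stmt_6 (A D : ℝ) (hA : 0 < A) (hA1 : A < 1) (hD : 0 < D) (hD1 : D < 1) :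
    ∃ L > (0:ℝ), ∀ p : ℝ, 0 < p → p < 1 → ∀ m : ℕ, 1 ≤ m →
      Real.log (1 / (D ^ m *
          A ^ (((m:ℝ) - 1) + ∑ j ∈ Finset.Icc 1 (m - 1), ((m:ℝ) - (j:ℝ)) * (j:ℝ) ^ (-1 + p))))
        ≤ (m:ℝ) * Real.log (1 / D) +
          Real.log (1 / A) * (L * (m:ℝ) ^ (1 + p) / (p * (p + 1))) :=
  stmt_6_general A D hA hA1 hD
end

section
/- Let ψ : [0,∞) → (0,∞) be continuous, nondecreasing on [1,∞), constant on [0,1], with ψ(s) ≍ s^{1+p} for large s, and let 0 < α < 1, C > 0, M ≥ C, t ∈ (1/2,1) with (1+p)t < 1. Define g(x) = exp(−((1−α)/(2M)) ∫₀ˣ ψ(s)^{−t} ds) and σ_j = g(j)/(M ψ(j)^t). Then for every m ∈ ℕ, (C ψ(m)^t − 1) σ_m < ((1−α)/2) ∑_{j=m+1}^∞ σ_j. -/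
/-!
With `f = ψ ^ (-t)` and `c = (1 - α) / (2 M)` one has `g = exp (-c ∫₀ˣ f)` and
`(1 - α) / 2 * σ j = c f(j) g(j)`. Since `ψ` is nondecreasing on `[0, ∞)`, `f` is nonincreasing,
so `∫ⱼ^{j+1} f` lies between `f (j + 1)` and `f j`; the tangent-line bounds for `exp` then squeeze
`g j - g (j + 1)` between `(1 - α) / 2 * σ (j + 1)` and `(1 - α) / 2 * σ j`. Because
`∫₀ˣ f ≥ x f(x) ≳ x ^ (1 - (1 + p) t) → ∞`, `g j → 0`, and telescoping gives the summability of `σ`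
together with `g m ≤ (1 - α) / 2 * (σ m + ∑_{j > m} σ j)`. It remains to note that
`(C ψ(m)^t - 1) σ m = (C / M) g m - σ m ≤ g m - σ m` and `(1 - α) / 2 < 1`.
-/

open Real Set Filter Topology

theorem Real.exp_sub_exp_le_mul_exp (y z : ℝ) : exp y - exp z ≤ (y - z) * exp y := by
  have h : exp y * (z - y + 1) ≤ exp z := by
    rw [show z = y + (z - y) by ring, exp_add, add_sub_cancel_left]
    exact mul_le_mul_of_nonneg_left (add_one_le_exp _) (exp_pos y).le
  linarith

theorem Real.mul_exp_le_exp_sub_exp (y z : ℝ) : (y - z) * exp z ≤ exp y - exp z := by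
  linarith [exp_sub_exp_le_mul_exp z y]

theorem le_add_tsum_of_sub_succ_le {a b : ℕ → ℝ} (ha : Tendsto a atTop (𝓝 0))
    (hb : ∀ n, 0 ≤ b n) (hlow : ∀ n, b (n + 1) ≤ a n - a (n + 1))
    (hup : ∀ n, a n - a (n + 1) ≤ b n) : a 0 ≤ b 0 + ∑' n, b (n + 1) := by
  have htel : HasSum (fun n ↦ a n - a (n + 1)) (a 0) := by
    rw [hasSum_iff_tendsto_nat_of_nonneg (fun n ↦ (hb _).trans (hlow n))]
    simp_rw [Finset.sum_range_sub']
    simpa using (tendsto_const_nhds (x := a 0)).sub ha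
  have hsucc : Summable fun n ↦ b (n + 1) :=
    htel.summable.of_nonneg_of_le (fun n ↦ hb _) hlow
  rw [← (summable_nat_add_iff 1).mp hsucc |>.tsum_eq_zero_add, ← htel.tsum_eq]
  exact htel.summable.tsum_le_tsum hup ((summable_nat_add_iff 1).mp hsucc)

theorem AntitoneOn.sub_mul_le_intervalIntegral {f : ℝ → ℝ} {a b : ℝ} (hab : a ≤ b)
    (hf : AntitoneOn f (Icc a b)) : (b - a) * f b ≤ ∫ x in a..b, f x := by
  have : ∫ _ in a..b, f b ≤ ∫ x in a..b, f x :=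
    intervalIntegral.integral_mono_on hab intervalIntegrable_const
      (hf.mono (uIcc_of_le hab).subset).intervalIntegrable
      (fun x hx ↦ hf hx ⟨hx.1.trans hx.2, le_rfl⟩ hx.2)
  simpa using this

theorem AntitoneOn.intervalIntegral_le_sub_mul {f : ℝ → ℝ} {a b : ℝ} (hab : a ≤ b)
    (hf : AntitoneOn f (Icc a b)) : ∫ x in a..b, f x ≤ (b - a) * f a := by
  have : ∫ x in a..b, f x ≤ ∫ _ in a..b, f a :=
    intervalIntegral.integral_mono_on hab
      (hf.mono (uIcc_of_le hab).subset).intervalIntegrable intervalIntegrable_const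
      (fun x hx ↦ hf ⟨le_rfl, hx.1.trans hx.2⟩ hx hx.1)
  simpa using this

theorem MonotoneOn.Ici_of_eq_on_Icc {ψ : ℝ → ℝ} {a b : ℝ} (hψ : MonotoneOn ψ (Ici b))
    (hconst : ∀ s, a ≤ s → s ≤ b → ψ s = ψ b) : MonotoneOn ψ (Ici a) := by
  intro x hx y hy hxy
  rcases le_total x b with hxb | hbx
  · rw [hconst x hx hxb]
    rcases le_total y b with hyb | hby
    · rw [hconst y (hx.trans hxy) hyb]
    · exact hψ self_mem_Ici hby hby
  · exact hψ hbx (hbx.trans hxy) hxy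

theorem MonotoneOn.antitoneOn_rpow_neg {ψ : ℝ → ℝ} {s : Set ℝ} {t : ℝ} (hψ : MonotoneOn ψ s)
    (hpos : ∀ x ∈ s, 0 < ψ x) (ht : 0 ≤ t) : AntitoneOn (fun x ↦ ψ x ^ (-t)) s :=
  fun _ hx _ hy hxy ↦ rpow_le_rpow_of_nonpos (hpos _ hx) (hψ hx hy hxy) (neg_nonpos.2 ht)

theorem tendsto_mul_rpow_neg_atTop {ψ : ℝ → ℝ} {A r t : ℝ} (hA : 0 < A) (ht : 0 ≤ t)
    (hrt : r * t < 1) (hψ : ∀ᶠ x in atTop, 0 < ψ x ∧ ψ x ≤ A * x ^ r) :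
    Tendsto (fun x ↦ x * ψ x ^ (-t)) atTop atTop := by
  have hpow : Tendsto (fun x : ℝ ↦ A ^ (-t) * x ^ (1 - r * t)) atTop atTop :=
    (tendsto_rpow_atTop (by linarith)).const_mul_atTop (rpow_pos_of_pos hA _)
  refine tendsto_atTop_mono' _ ?_ hpow
  filter_upwards [hψ, eventually_gt_atTop 0] with x ⟨hψx, hψA⟩ hx
  calc A ^ (-t) * x ^ (1 - r * t) = x * (A * x ^ r) ^ (-t) := by
        rw [mul_rpow hA.le (rpow_nonneg hx.le _), ← rpow_mul hx.le, sub_eq_add_neg,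
          rpow_add hx, rpow_one]
        ring_nf
    _ ≤ x * ψ x ^ (-t) :=
        mul_le_mul_of_nonneg_left (rpow_le_rpow_of_nonpos hψx hψA (neg_nonpos.2 ht)) hx.le

noncomputable def expNegIntegral (c : ℝ) (f : ℝ → ℝ) (x : ℝ) : ℝ :=
  exp (-(c * ∫ s in (0 : ℝ)..x, f s))

section expNegIntegral

variable {f : ℝ → ℝ} {c a : ℝ}

theorem AntitoneOn.intervalIntegral_add_one_sub (hf : AntitoneOn f (Ici 0)) (ha : 0 ≤ a) :
    (∫ s in (0 : ℝ)..a + 1, f s) - ∫ s in (0 : ℝ)..a, f s = ∫ s in a..a + 1, f s := by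
  have hint : ∀ x : ℝ, 0 ≤ x → IntervalIntegrable f MeasureTheory.volume 0 x := fun x hx ↦
    (hf.mono (by rw [uIcc_of_le hx]; exact Icc_subset_Ici_self)).intervalIntegrable
  exact intervalIntegral.integral_interval_sub_left (hint _ (by linarith)) (hint _ ha)

theorem expNegIntegral_sub_add_one_le (hf : AntitoneOn f (Ici 0)) (hc : 0 ≤ c) (ha : 0 ≤ a) :
    expNegIntegral c f a - expNegIntegral c f (a + 1) ≤ c * f a * expNegIntegral c f a := by
  have hle : ∫ s in a..a + 1, f s ≤ f a := by
    simpa using (hf.mono ((Icc_subset_Ici_iff (by linarith)).2 ha)).intervalIntegral_le_sub_mul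
      (b := a + 1) (by linarith)
  calc _ ≤ (c * ∫ s in a..a + 1, f s) * expNegIntegral c f a := by
        unfold expNegIntegral
        rw [← hf.intervalIntegral_add_one_sub ha]
        linear_combination exp_sub_exp_le_mul_exp (-(c * ∫ s in (0 : ℝ)..a, f s))
          (-(c * ∫ s in (0 : ℝ)..a + 1, f s))
    _ ≤ c * f a * expNegIntegral c f a := by
        gcongr
        exact (exp_pos _).le

theorem mul_expNegIntegral_add_one_le_sub (hf : AntitoneOn f (Ici 0)) (hc : 0 ≤ c)
    (ha : 0 ≤ a) :
    c * f (a + 1) * expNegIntegral c f (a + 1) ≤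
      expNegIntegral c f a - expNegIntegral c f (a + 1) := by
  have hge : f (a + 1) ≤ ∫ s in a..a + 1, f s := by
    simpa using (hf.mono ((Icc_subset_Ici_iff (by linarith)).2 ha)).sub_mul_le_intervalIntegral
      (b := a + 1) (by linarith)
  calc _ ≤ (c * ∫ s in a..a + 1, f s) * expNegIntegral c f (a + 1) := by
        gcongr
        exact (exp_pos _).le
    _ ≤ expNegIntegral c f a - expNegIntegral c f (a + 1) := by
        unfold expNegIntegral
        rw [← hf.intervalIntegral_add_one_sub ha]
        linear_combination mul_exp_le_exp_sub_exp (-(c * ∫ s in (0 : ℝ)..a, f s))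
          (-(c * ∫ s in (0 : ℝ)..a + 1, f s))

theorem tendsto_expNegIntegral_atTop (hf : AntitoneOn f (Ici 0)) (hc : 0 < c)
    (hgrowth : Tendsto (fun x ↦ x * f x) atTop atTop) :
    Tendsto (expNegIntegral c f) atTop (𝓝 0) := by
  have hI : Tendsto (fun x ↦ ∫ s in (0 : ℝ)..x, f s) atTop atTop := by
    refine tendsto_atTop_mono' _ ?_ hgrowth
    filter_upwards [eventually_ge_atTop 0] with x hx
    simpa using (hf.mono Icc_subset_Ici_self).sub_mul_le_intervalIntegral hx
  exact tendsto_exp_atBot.comp (tendsto_neg_atTop_atBot.comp (hI.const_mul_atTop hc))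

theorem expNegIntegral_le_add_tsum (hf : AntitoneOn f (Ici 0)) (hf₀ : ∀ x, 0 ≤ x → 0 ≤ f x)
    (hc : 0 < c) (hgrowth : Tendsto (fun x ↦ x * f x) atTop atTop) (m : ℕ) :
    expNegIntegral c f m ≤
      c * f m * expNegIntegral c f m +
        ∑' n : ℕ, c * f ↑(m + 1 + n) * expNegIntegral c f ↑(m + 1 + n) := by
  have hcast : Tendsto (fun n : ℕ ↦ ((m + n : ℕ) : ℝ)) atTop atTop := by
    push_cast
    exact tendsto_atTop_add_const_left _ _ tendsto_natCast_atTop_atTop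
  have hsucc : ∀ n : ℕ, ((m + (n + 1) : ℕ) : ℝ) = ((m + n : ℕ) : ℝ) + 1 := fun n ↦ by
    push_cast
    ring
  have key := le_add_tsum_of_sub_succ_le (a := fun n ↦ expNegIntegral c f ↑(m + n))
    (b := fun n ↦ c * f ↑(m + n) * expNegIntegral c f ↑(m + n))
    ((tendsto_expNegIntegral_atTop hf hc hgrowth).comp hcast)
    (fun n ↦ mul_nonneg (mul_nonneg hc.le (hf₀ _ (Nat.cast_nonneg _))) (exp_pos _).le)
    (fun n ↦ by
      rw [hsucc]
      exact mul_expNegIntegral_add_one_le_sub hf hc.le (Nat.cast_nonneg _))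
    (fun n ↦ by
      rw [hsucc]
      exact expNegIntegral_sub_add_one_le hf hc.le (Nat.cast_nonneg _))
  simpa only [add_zero, add_comm 1, add_assoc] using key

end expNegIntegral

theorem stmt_10_general (ψ : ℝ → ℝ)
    (hψpos : ∀ s ≥ (0:ℝ), 0 < ψ s)
    (hmono : MonotoneOn ψ (Set.Ici 1))
    (hconst : ∀ s : ℝ, 0 ≤ s → s ≤ 1 → ψ s = ψ 1)
    (p N A₂ A₃ : ℝ) (hA₂ : 0 < A₂)
    (hcomp : ∀ s ≥ N, A₃ * s ^ (1 + p) ≤ ψ s ∧ ψ s ≤ A₂ * s ^ (1 + p))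
    (α C M t : ℝ) (hα : 0 < α) (hα1 : α < 1) (hC : 0 < C) (hMC : C ≤ M)
    (ht : 1 / 2 < t) (hpt : (1 + p) * t < 1)
    (g : ℝ → ℝ)
    (hg : ∀ x, g x = Real.exp (-((1 - α) / (2 * M) * ∫ s in (0:ℝ)..x, (ψ s) ^ (-t))))
    (σ : ℕ → ℝ) (hσ : ∀ j : ℕ, σ j = g j / (M * (ψ j) ^ t)) :
    ∀ m : ℕ, 1 ≤ m →
      (C * (ψ m) ^ t - 1) * σ m < (1 - α) / 2 * ∑' j : ℕ, σ (m + 1 + j) := by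
  intro m _
  have hM : 0 < M := hC.trans_le hMC
  set c := (1 - α) / (2 * M)
  have hc : 0 < c := div_pos (by linarith) (by linarith)
  have hgE : g = expNegIntegral c fun s ↦ ψ s ^ (-t) := funext hg
  have hψt : ∀ j : ℕ, 0 < ψ j ^ t := fun j ↦ rpow_pos_of_pos (hψpos _ j.cast_nonneg) t
  have hσE : ∀ j : ℕ, c * ψ j ^ (-t) * g j = (1 - α) / 2 * σ j := fun j ↦ by
    simp only [hσ, c, rpow_neg (hψpos _ j.cast_nonneg).le]
    field_simp
  have hgrowth : Tendsto (fun x ↦ x * ψ x ^ (-t)) atTop atTop :=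
    tendsto_mul_rpow_neg_atTop hA₂ (by linarith) hpt <| by
      filter_upwards [eventually_ge_atTop N, eventually_ge_atTop 0] with x hxN hx0
      exact ⟨hψpos x hx0, (hcomp x hxN).2⟩
  have hgm : g m ≤ (1 - α) / 2 * σ m + (1 - α) / 2 * ∑' n, σ (m + 1 + n) := by
    simpa only [← hgE, hσE, tsum_mul_left] using expNegIntegral_le_add_tsum
      ((hmono.Ici_of_eq_on_Icc hconst).antitoneOn_rpow_neg hψpos (by linarith))
      (fun x hx ↦ (rpow_pos_of_pos (hψpos x hx) _).le) hc hgrowth m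
  have hgpos : 0 < g m := by rw [hgE]; exact exp_pos _
  have hσm : 0 < σ m := by rw [hσ]; exact div_pos hgpos (mul_pos hM (hψt m))
  have hCM : C / M * g m ≤ g m := mul_le_of_le_one_left hgpos.le ((div_le_one hM).2 hMC)
  have hσ_absorb : (1 - α) / 2 * σ m < σ m := by nlinarith
  calc (C * ψ m ^ t - 1) * σ m = C / M * g m - σ m := by
        rw [hσ]
        field_simp [(hψt m).ne']
    _ < (1 - α) / 2 * ∑' j : ℕ, σ (m + 1 + j) := by linarith

theorem stmt_10 (ψ : ℝ → ℝ)
    (hψc : ContinuousOn ψ (Set.Ici 0))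
    (hψpos : ∀ s ≥ (0:ℝ), 0 < ψ s)
    (hmono : MonotoneOn ψ (Set.Ici 1))
    (hconst : ∀ s : ℝ, 0 ≤ s → s ≤ 1 → ψ s = ψ 1)
    (p N A₂ A₃ : ℝ) (hp : 0 < p) (hN : 0 < N) (hA₂ : 0 < A₂) (hA₃ : 0 < A₃)
    (hcomp : ∀ s ≥ N, A₃ * s ^ (1 + p) ≤ ψ s ∧ ψ s ≤ A₂ * s ^ (1 + p))
    (α C M t : ℝ) (hα : 0 < α) (hα1 : α < 1) (hC : 0 < C) (hMC : C ≤ M)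
    (ht : 1 / 2 < t) (ht1 : t < 1) (hpt : (1 + p) * t < 1)
    (g : ℝ → ℝ)
    (hg : ∀ x, g x = Real.exp (-((1 - α) / (2 * M) * ∫ s in (0:ℝ)..x, (ψ s) ^ (-t))))
    (σ : ℕ → ℝ) (hσ : ∀ j : ℕ, σ j = g j / (M * (ψ j) ^ t)) :
    ∀ m : ℕ, 1 ≤ m →
      (C * (ψ m) ^ t - 1) * σ m < (1 - α) / 2 * ∑' j : ℕ, σ (m + 1 + j) :=
  stmt_10_general ψ hψpos hmono hconst p N A₂ A₃ hA₂ hcomp α C M t hα hα1 hC hMC ht hpt g hg σ hσ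
end

section
/- (Bishop-type peak function theorem for closed subspaces.) Let Ω ⊂ ℝⁿ be a bounded domain, x ∈ cl(Ω), and ℰ a closed subspace of C(cl(Ω)). Suppose there exist constants 0 < α < 1, 0 < s ≤ 1, 0 < t < 1, 0 < A < 1, C > 0 such that for each neighbourhood U of x with r_x(U) := sup_{y∈U}|y−x| < 1 there exists f_U ∈ ℰ with: (1) f_U(x) = 1; (2) |f_U(y)| ≤ α for all y ∈ cl(Ω)\U; (3) |f_U(y)| ≤ C (log(1/r_x(U)))^t for all y ∈ U; (4) {y ∈ cl(Ω) : |f_U(y)| < 1 + ε^s} ⊃ cl(Ω) ∩ B(x; A r_x(U) ε) for all 0 < ε < 1. Then there exists F ∈ ℰ with F(x) = 1 and |F(y)| < 1 for all y ∈ cl(Ω)\{x}. -/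
/-!
Take radii `r k = ρ * (A / 4) ^ k` and let `f k` be the function given by the hypothesis for
`U = closedBall x (r k)`; connectedness of `closure Ω` makes `r_x(U) = r k`. The peak function is
the normalized average `F = (∑ w k • f k) / ∑ w k` with `w k = 1 / ((k + c) * (k + 1 + c))`.
A point `y ≠ x` with `r (K + 1) < dist y x ≤ r K` has `‖f k y‖ ≤ α` for `k > K`,
`‖f K y‖ ≤ C * log (1 / r K) ^ t = O(K ^ t)`, and, by (4) with `ε ≈ (A / 4) ^ (K - 1 - k)`,
`‖f k y‖ ≤ 1 + Q ^ (K - 1 - k)` for `k < K`, where `Q = (A / 4) ^ s < 1`. The weights decay like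
`k⁻²` while the tail `∑_{k > K} w k = (K + 1 + c)⁻¹` is only of order `K⁻¹`, so for large `c` the
gain `(1 - α) * (K + 1 + c)⁻¹` on the tail beats both the `O(K ^ (t - 2))` excess of `f K` and the
geometrically damped excess of the `f k` with `k < K`; hence `∑ w k * ‖f k y‖ < ∑ w k`.
-/

open Real Set Metric Filter Topology

theorem exists_weighted_average_mem {X : Type*} [TopologicalSpace X] [CompactSpace X]
    {E : Submodule ℂ C(X, ℂ)} (hE : IsClosed (E : Set C(X, ℂ))) {x : X} {f : ℕ → C(X, ℂ)}
    (hfE : ∀ k, f k ∈ E) (hfx : ∀ k, f k x = 1) {w : ℕ → ℝ} (hw : ∀ k, 0 < w k)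
    (hwf : Summable fun k => w k * ‖f k‖) :
    ∃ F ∈ E, F x = 1 ∧ ∀ y, ∑' k, w k * ‖f k y‖ < ∑' k, w k → ‖F y‖ < 1 := by
  have hw_le : ∀ k, w k ≤ w k * ‖f k‖ := fun k =>
    le_mul_of_one_le_right (hw k).le (by simpa [hfx] using (f k).norm_coe_le_norm x)
  have hw_sum : Summable w := hwf.of_nonneg_of_le (fun k => (hw k).le) hw_le
  have hW : 0 < ∑' k, w k := hw_sum.tsum_pos (fun k => (hw k).le) 0 (hw 0)
  have hg : HasSum (fun k => (w k : ℂ) • f k) (∑' k, (w k : ℂ) • f k) := by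
    refine (Summable.of_norm_bounded hwf fun k => ?_).hasSum
    rw [norm_smul, Complex.norm_real, norm_of_nonneg (hw k).le]
  set g := ∑' k, (w k : ℂ) • f k
  have hgE : g ∈ E := hE.mem_of_tendsto hg.tendsto_sum_nat
    (Eventually.of_forall fun m => E.sum_mem fun k _ => E.smul_mem _ (hfE k))
  have hg_apply (y : X) : HasSum (fun k => (w k : ℂ) * f k y) (g y) :=
    hg.mapL (ContinuousMap.evalCLM ℂ y)
  have hgx : g x = (∑' k, w k : ℝ) := by
    refine (hg_apply x).unique ?_
    simpa [hfx] using Complex.ofRealCLM.hasSum hw_sum.hasSum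
  refine ⟨((∑' k, w k : ℝ) : ℂ)⁻¹ • g, E.smul_mem _ hgE, ?_, fun y hy => ?_⟩
  · rw [ContinuousMap.smul_apply, hgx, smul_eq_mul, inv_mul_cancel₀ (by exact_mod_cast hW.ne')]
  have hgy : ‖g y‖ ≤ ∑' k, w k * ‖f k y‖ := by
    have hterm (k : ℕ) : ‖(w k : ℂ) * f k y‖ = w k * ‖f k y‖ := by
      rw [norm_mul, Complex.norm_real, norm_of_nonneg (hw k).le]
    have hsum : Summable fun k => w k * ‖f k y‖ := hwf.of_nonneg_of_le
      (fun k => mul_nonneg (hw k).le (norm_nonneg _))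
      fun k => mul_le_mul_of_nonneg_left ((f k).norm_coe_le_norm y) (hw k).le
    rw [← (hg_apply y).tsum_eq, ← tsum_congr hterm]
    exact norm_tsum_le_tsum_norm (by simpa only [hterm] using hsum)
  rw [ContinuousMap.smul_apply, smul_eq_mul, norm_mul, norm_inv, Complex.norm_real,
    norm_of_nonneg hW.le, inv_mul_lt_one₀ hW]
  exact hgy.trans_lt hy

lemma summable_add_two_mul_pow {Q : ℝ} (hQ0 : 0 ≤ Q) (hQ1 : Q < 1) :
    Summable fun j : ℕ => ((j : ℝ) + 2) * Q ^ j := by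
  have hQ : ‖Q‖ < 1 := by rwa [norm_of_nonneg hQ0]
  simpa [add_mul] using (summable_pow_mul_geometric_of_norm_lt_one 1 hQ).add
    ((summable_geometric_of_lt_one hQ0 hQ1).mul_left 2)

noncomputable def peakWeight (c : ℝ) (k : ℕ) : ℝ := ((k + c) * (k + 1 + c))⁻¹

section peakWeight

variable {c : ℝ}

lemma peakWeight_pos (hc : 0 < c) (k : ℕ) : 0 < peakWeight c k := by
  unfold peakWeight; positivity

lemma peakWeight_eq_sub (hc : 0 < c) (k : ℕ) :
    peakWeight c k = (k + c)⁻¹ - (k + 1 + c)⁻¹ := by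
  unfold peakWeight
  field_simp
  ring

lemma sum_range_peakWeight (hc : 0 < c) (m : ℕ) :
    ∑ k ∈ Finset.range m, peakWeight c k = c⁻¹ - (m + c)⁻¹ := by
  simpa [peakWeight_eq_sub hc] using Finset.sum_range_sub' (fun k : ℕ => ((k : ℝ) + c)⁻¹) m

lemma hasSum_peakWeight (hc : 0 < c) : HasSum (peakWeight c) c⁻¹ := by
  rw [hasSum_iff_tendsto_nat_of_nonneg (fun k => (peakWeight_pos hc k).le)]
  simp_rw [sum_range_peakWeight hc]
  have : Tendsto (fun m : ℕ => ((m : ℝ) + c)⁻¹) atTop (𝓝 0) :=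
    (tendsto_atTop_add_const_right _ c tendsto_natCast_atTop_atTop).inv_tendsto_atTop
  simpa using tendsto_const_nhds.sub this

lemma hasSum_peakWeight_nat_add (hc : 0 < c) (m : ℕ) :
    HasSum (fun k => peakWeight c (k + m)) (m + c)⁻¹ := by
  simpa [sum_range_peakWeight hc] using (hasSum_nat_add_iff' m).mpr (hasSum_peakWeight hc)

lemma peakWeight_le_inv_sq (hc : 1 ≤ c) (k : ℕ) : peakWeight c k ≤ ((k + 1 : ℝ) ^ 2)⁻¹ := by
  unfold peakWeight
  gcongr
  nlinarith

lemma peakWeight_mul_le (hc : 0 < c) (k j : ℕ) :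
    peakWeight c k * (k + j + 2 + c) ≤ (j + 2) / c := by
  have hk : (0 : ℝ) ≤ k := k.cast_nonneg
  have hj : (0 : ℝ) ≤ j := j.cast_nonneg
  calc peakWeight c k * (k + j + 2 + c) ≤ peakWeight c k * ((k + 1 + c) * (j + 2)) := by
        gcongr
        · exact (peakWeight_pos hc k).le
        · nlinarith
    _ = (j + 2) / (k + c) := by unfold peakWeight; field_simp
    _ ≤ (j + 2) / c := by gcongr; linarith

lemma sum_peakWeight_mul_pow_le (hc : 0 < c) {Q : ℝ} (hQ0 : 0 ≤ Q) (hQ1 : Q < 1) (K : ℕ) :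
    (∑ k ∈ Finset.range K, peakWeight c k * Q ^ (K - 1 - k)) * (K + 1 + c) ≤
      (∑' j : ℕ, ((j : ℝ) + 2) * Q ^ j) / c := by
  calc (∑ k ∈ Finset.range K, peakWeight c k * Q ^ (K - 1 - k)) * (K + 1 + c)
      ≤ ∑ k ∈ Finset.range K, (((K - 1 - k : ℕ) : ℝ) + 2) * Q ^ (K - 1 - k) / c := by
        rw [Finset.sum_mul]
        refine Finset.sum_le_sum fun k hk => ?_
        have hK : (K : ℝ) + 1 + c = k + (K - 1 - k : ℕ) + 2 + c := by
          rw [Finset.mem_range] at hk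
          rw [Nat.cast_sub (by omega), Nat.cast_sub (by omega)]
          push_cast
          ring
        rw [hK, mul_right_comm, mul_div_right_comm]
        gcongr
        exact peakWeight_mul_le hc k _
    _ = (∑ j ∈ Finset.range K, ((j : ℝ) + 2) * Q ^ j) / c := by
        rw [Finset.sum_div]
        exact Finset.sum_range_reflect (fun j => ((j : ℝ) + 2) * Q ^ j / c) K
    _ ≤ (∑' j : ℕ, ((j : ℝ) + 2) * Q ^ j) / c := by
        gcongr
        exact (summable_add_two_mul_pow hQ0 hQ1).sum_le_tsum _ fun j _ => by positivity

lemma summable_peakWeight_mul_rpow (hc : 1 ≤ c) {t : ℝ} (ht : t < 1) :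
    Summable fun k : ℕ => peakWeight c k * ((k : ℝ) + 1) ^ t := by
  have hp : Summable fun k : ℕ => ((k + 1 : ℕ) : ℝ) ^ (t - 2) :=
    (summable_nat_add_iff 1).mpr (Real.summable_nat_rpow.mpr (by linarith))
  refine hp.of_nonneg_of_le
    (fun k => mul_nonneg (peakWeight_pos (by linarith) k).le (by positivity)) fun k => ?_
  have hk : (0 : ℝ) < k + 1 := by positivity
  calc peakWeight c k * ((k : ℝ) + 1) ^ t ≤ ((k + 1 : ℝ) ^ 2)⁻¹ * ((k : ℝ) + 1) ^ t := by
        gcongr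
        exact peakWeight_le_inv_sq hc k
    _ = ((k + 1 : ℕ) : ℝ) ^ (t - 2) := by
        rw [Nat.cast_succ, Real.rpow_sub hk, Real.rpow_two, inv_mul_eq_div]

theorem tsum_peakWeight_mul_lt_tsum {α Q : ℝ} (hα : α < 1) (hQ0 : 0 ≤ Q) (hQ1 : Q < 1)
    (hc : 3 * ∑' j : ℕ, ((j : ℝ) + 2) * Q ^ j ≤ (1 - α) * c) {b : ℕ → ℝ}
    (hb : Summable fun k => peakWeight c k * b k) (K : ℕ)
    (hnear : ∀ k < K, b k ≤ 1 + Q ^ (K - 1 - k)) (hmid : 3 * b K ≤ (1 - α) * (K + c))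
    (hfar : ∀ k, K < k → b k ≤ α) :
    ∑' k, peakWeight c k * b k < ∑' k, peakWeight c k := by
  have hσ : 0 < ∑' j : ℕ, ((j : ℝ) + 2) * Q ^ j :=
    (summable_add_two_mul_pow hQ0 hQ1).tsum_pos (fun j => by positivity) 0 (by simp)
  have hc0 : 0 < c := pos_of_mul_pos_right (a := 1 - α) (by linarith) (by linarith)
  have hKc : (0 : ℝ) < K + c := by positivity
  set N : ℝ := K + 1 + c
  have hN : K + c < N := by linarith
  have hnear_sum : ∑ k ∈ Finset.range K, peakWeight c k * b k ≤
      ∑ k ∈ Finset.range K, peakWeight c k + (1 - α) / 3 / N := by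
    rw [← sub_le_iff_le_add', ← Finset.sum_sub_distrib, le_div_iff₀ (by positivity)]
    refine le_trans ?_ ((sum_peakWeight_mul_pow_le hc0 hQ0 hQ1 K).trans ?_)
    · gcongr with k hk
      rw [← mul_sub_one]
      have := hnear k (Finset.mem_range.mp hk)
      exact mul_le_mul_of_nonneg_left (by linarith) (peakWeight_pos hc0 k).le
    · rw [div_le_iff₀ hc0]; linarith
  have hmid' : peakWeight c K * b K ≤ (1 - α) / 3 / N := by
    rw [peakWeight, mul_comm, ← div_eq_mul_inv, div_le_div_iff₀ (by positivity) (by positivity)]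
    nlinarith
  have htail : ∑' j, peakWeight c (j + (K + 1)) * b (j + (K + 1)) ≤ α / N := by
    have hw := hasSum_peakWeight_nat_add hc0 (K + 1)
    push_cast at hw
    rw [div_eq_mul_inv, ← (hw.mul_left α).tsum_eq]
    refine Summable.tsum_le_tsum (fun j => ?_) ((summable_nat_add_iff (K + 1)).mpr hb)
      (hw.mul_left α).summable
    rw [mul_comm α]
    exact mul_le_mul_of_nonneg_left (hfar _ (by omega)) (peakWeight_pos hc0 _).le
  rw [← hb.sum_add_tsum_nat_add (K + 1), Finset.sum_range_succ, (hasSum_peakWeight hc0).tsum_eq]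
  rw [sum_range_peakWeight hc0] at hnear_sum
  have hfinal : (1 - α) / 3 / N + (1 - α) / 3 / N + α / N < (K + c)⁻¹ :=
    calc (1 - α) / 3 / N + (1 - α) / 3 / N + α / N = (2 + α) / 3 / N := by ring
      _ < 1 / N := by gcongr; linarith
      _ < (K + c)⁻¹ := by rw [one_div]; gcongr
  linarith

end peakWeight

lemma mul_rpow_le_add_rpow {t L u : ℝ} (ht0 : 0 ≤ t) (ht1 : t < 1) (hL : 0 ≤ L) (hu : 0 ≤ u) :
    L * u ^ t ≤ u + L ^ (1 - t)⁻¹ := by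
  have hpow : (L ^ (1 - t)⁻¹) ^ (1 - t) = L := by
    rw [← Real.rpow_mul hL, inv_mul_cancel₀ (by linarith), Real.rpow_one]
  have := Real.geom_mean_le_arith_mean2_weighted ht0 (by linarith) hu
    (Real.rpow_nonneg hL (1 - t)⁻¹) (add_sub_cancel t 1)
  rw [hpow] at this
  nlinarith [Real.rpow_nonneg hL (1 - t)⁻¹]

theorem exists_peak_of_levels {X : Type*} [TopologicalSpace X] [CompactSpace X]
    {E : Submodule ℂ C(X, ℂ)} (hE : IsClosed (E : Set C(X, ℂ))) {x : X} {f : ℕ → C(X, ℂ)}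
    (hfE : ∀ k, f k ∈ E) (hfx : ∀ k, f k x = 1) {α Q L t : ℝ} (hα : α < 1) (hQ0 : 0 ≤ Q)
    (hQ1 : Q < 1) (ht0 : 0 ≤ t) (ht1 : t < 1) (hnorm : ∀ k, ‖f k‖ ≤ L * ((k : ℝ) + 1) ^ t)
    (hlevel : ∀ y, y ≠ x → ∃ K, (∀ k < K, ‖f k y‖ ≤ 1 + Q ^ (K - 1 - k)) ∧
      ∀ k, K < k → ‖f k y‖ ≤ α) :
    ∃ F ∈ E, F x = 1 ∧ ∀ y, y ≠ x → ‖F y‖ < 1 := by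
  have hL : 0 ≤ L := by
    have h := ((f 0).norm_coe_le_norm x).trans (hnorm 0)
    simp only [hfx, norm_one, Nat.cast_zero, zero_add, Real.one_rpow, mul_one] at h
    linarith
  set σ := ∑' j : ℕ, ((j : ℝ) + 2) * Q ^ j
  set B := 3 * L / (1 - α)
  set c := max (3 * σ / (1 - α)) (1 + B ^ (1 - t)⁻¹)
  have h1α : 0 < 1 - α := by linarith
  have hB : 0 ≤ B := by positivity
  have hc1 : 1 ≤ c := le_max_of_le_right (by linarith [Real.rpow_nonneg hB (1 - t)⁻¹])
  have hw (k : ℕ) : 0 ≤ peakWeight c k := (peakWeight_pos (by linarith) k).le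
  have hcσ : 3 * σ ≤ (1 - α) * c := by
    rw [← div_le_iff₀' h1α]; exact le_max_left _ _
  have hcL (k : ℕ) : 3 * (L * ((k : ℝ) + 1) ^ t) ≤ (1 - α) * (k + c) := by
    have := mul_rpow_le_add_rpow ht0 ht1 hB (by positivity : (0 : ℝ) ≤ k + 1)
    have hc : 1 + B ^ (1 - t)⁻¹ ≤ c := le_max_right _ _
    calc 3 * (L * ((k : ℝ) + 1) ^ t) = (1 - α) * (B * ((k : ℝ) + 1) ^ t) := by
          simp only [B]; field_simp
      _ ≤ (1 - α) * (k + c) := by gcongr; linarith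
  have hwf : Summable fun k => peakWeight c k * ‖f k‖ :=
    ((summable_peakWeight_mul_rpow hc1 ht1).mul_left L).of_nonneg_of_le
      (fun k => mul_nonneg (hw k) (norm_nonneg _))
      fun k => by rw [mul_left_comm]; exact mul_le_mul_of_nonneg_left (hnorm k) (hw k)
  obtain ⟨F, hFE, hFx, hF⟩ :=
    exists_weighted_average_mem hE hfE hfx (peakWeight_pos (by linarith)) hwf
  refine ⟨F, hFE, hFx, fun y hy => hF y ?_⟩
  obtain ⟨K, hnear, hfar⟩ := hlevel y hy
  have hby (k : ℕ) : ‖f k y‖ ≤ ‖f k‖ := (f k).norm_coe_le_norm y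
  have hmid : 3 * ‖f K y‖ ≤ (1 - α) * (K + c) := by linarith [hby K, hnorm K, hcL K]
  have hsum : Summable fun k => peakWeight c k * ‖f k y‖ :=
    hwf.of_nonneg_of_le (fun k => mul_nonneg (hw k) (norm_nonneg _))
      fun k => mul_le_mul_of_nonneg_left (hby k) (hw k)
  exact tsum_peakWeight_mul_lt_tsum hα hQ0 hQ1 hcσ hsum K hnear hmid hfar

lemma exists_succ_lt_and_forall_le {r : ℕ → ℝ} (hr : Tendsto r atTop (𝓝 0)) {d : ℝ} (hd : 0 < d) :
    ∃ K, r (K + 1) < d ∧ ∀ k < K, d ≤ r (k + 1) := by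
  classical
  have hex : ∃ k, r (k + 1) < d :=
    ((hr.comp (tendsto_add_atTop_nat 1)).eventually (gt_mem_nhds hd)).exists
  exact ⟨Nat.find hex, Nat.find_spec hex, fun k hk => not_lt.mp (Nat.find_min hex hk)⟩

lemma log_one_div_mul_pow_le {ρ q : ℝ} (hρ : 0 < ρ) (hρ1 : ρ ≤ 1) (hq : 0 < q) (hq1 : q ≤ 1)
    (k : ℕ) : log (1 / (ρ * q ^ k)) ≤ (log (1 / ρ) + log (1 / q)) * (k + 1) := by
  have hlρ : log ρ ≤ 0 := Real.log_nonpos hρ.le hρ1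
  have hlq : log q ≤ 0 := Real.log_nonpos hq.le hq1
  have hk : (0 : ℝ) ≤ k := k.cast_nonneg
  simp only [one_div, Real.log_inv, Real.log_mul hρ.ne' (pow_pos hq k).ne', Real.log_pow]
  nlinarith

theorem exists_peak_of_closedBall_family {X : Type*} [MetricSpace X] [CompactSpace X]
    {E : Submodule ℂ C(X, ℂ)} (hE : IsClosed (E : Set C(X, ℂ))) {x : X} {α s t A C ρ : ℝ}
    (hα1 : α < 1) (hs : 0 < s) (ht0 : 0 ≤ t) (ht1 : t < 1) (hA : 0 < A) (hA1 : A < 1)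
    (hC : 0 ≤ C) (hρ : 0 < ρ) (hρ1 : ρ ≤ 1)
    (hf : ∀ r, 0 < r → r ≤ ρ → ∃ f : C(X, ℂ), f ∈ E ∧ f x = 1 ∧
      (∀ y, r < dist y x → ‖f y‖ ≤ α) ∧ (∀ y, dist y x ≤ r → ‖f y‖ ≤ C * log (1 / r) ^ t) ∧
      ∀ ε, 0 < ε → ε < 1 → ∀ y, dist y x < A * r * ε → ‖f y‖ < 1 + ε ^ s) :
    ∃ F ∈ E, F x = 1 ∧ ∀ y, y ≠ x → ‖F y‖ < 1 := by
  set q := A / 4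
  have hq : 0 < q := by positivity
  have hq1 : q < 1 := by simp only [q]; linarith
  set r : ℕ → ℝ := fun k => ρ * q ^ k
  have hr_pos (k : ℕ) : 0 < r k := by positivity
  have hr_le (k : ℕ) : r k ≤ ρ := mul_le_of_le_one_right hρ.le (pow_le_one₀ hq.le hq1.le)
  have hr_anti : Antitone r := fun j k hjk =>
    mul_le_mul_of_nonneg_left (pow_le_pow_of_le_one hq.le hq1.le hjk) hρ.le
  have hr_lim : Tendsto r atTop (𝓝 0) := by
    simpa using (tendsto_pow_atTop_nhds_zero_of_lt_one hq.le hq1).const_mul ρ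
  choose f hfE hfx hfar hmid hnear using fun k => hf (r k) (hr_pos k) (hr_le k)
  set L := C * (log (1 / ρ) + log (1 / q)) ^ t
  have hM (k : ℕ) : C * log (1 / r k) ^ t ≤ L * ((k : ℝ) + 1) ^ t := by
    have h0 : 0 ≤ log (1 / r k) :=
      Real.log_nonneg (one_le_one_div (hr_pos k) ((hr_le k).trans hρ1))
    rw [mul_assoc, ← Real.mul_rpow (add_nonneg (Real.log_nonneg (one_le_one_div hρ hρ1))
      (Real.log_nonneg (one_le_one_div hq hq1.le))) (by positivity)]
    gcongr
    exact log_one_div_mul_pow_le hρ hρ1 hq hq1.le k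
  refine exists_peak_of_levels hE hfE hfx hα1 (Real.rpow_nonneg hq.le s)
    (Real.rpow_lt_one hq.le hq1 hs) ht0 ht1 (L := L) (fun k => ?_) fun y hy => ?_
  · have hM1 : 1 ≤ C * log (1 / r k) ^ t := by
      simpa [hfx] using hmid k x (by simp [(hr_pos k).le])
    rw [ContinuousMap.norm_le _ (by linarith [hM k])]
    intro y
    rcases le_or_gt (dist y x) (r k) with hy | hy
    · exact (hmid k y hy).trans (hM k)
    · linarith [hfar k y hy, hM k]
  obtain ⟨K, hK, hmin⟩ := exists_succ_lt_and_forall_le hr_lim (dist_pos.mpr hy)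
  refine ⟨K, fun k hk => ?_, fun k hk => hfar k y ((hr_anti hk).trans_lt hK)⟩
  set j := K - 1 - k
  have hdist : dist y x ≤ r K := by
    simpa [Nat.sub_add_cancel (by omega : 1 ≤ K)] using hmin (K - 1) (by omega)
  have hε : A * r k * (q ^ j / 2) = 2 * r K := by
    simp only [r, q]
    rw [show K = k + j + 1 by omega, pow_succ, pow_add]
    ring
  have hqj : q ^ j ≤ 1 := pow_le_one₀ hq.le hq1.le
  have hpow : (q ^ j / 2) ^ s ≤ (q ^ s) ^ j := by
    rw [Real.rpow_pow_comm hq.le]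
    exact Real.rpow_le_rpow (by positivity) (by linarith [pow_pos hq j]) hs.le
  linarith [hnear k (q ^ j / 2) (by positivity) (by linarith) y (by linarith [hr_pos K])]

lemma iSup_dist_closedBall_le {X : Type*} [PseudoMetricSpace X] (x : X) {r : ℝ} (hr : 0 ≤ r) :
    ⨆ y ∈ closedBall x r, dist y x ≤ r :=
  Real.iSup_le (fun _ => Real.iSup_le (fun hy => hy) hr) hr

lemma iSup_dist_closedBall_eq {X : Type*} [PseudoMetricSpace X] [PreconnectedSpace X] {x z : X}
    {r : ℝ} (hr : 0 ≤ r) (hrz : r ≤ dist z x) : ⨆ y ∈ closedBall x r, dist y x = r := by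
  obtain ⟨y, hy⟩ := intermediate_value_univ x z (continuous_id.dist continuous_const)
    ⟨by simpa using hr, hrz⟩
  simp only [id] at hy
  refine (iSup_dist_closedBall_le x hr).antisymm (le_ciSup_of_le ⟨r, ?_⟩ y ?_)
  · rintro _ ⟨y', rfl⟩
    exact Real.iSup_le (fun hy' => hy') hr
  · rw [ciSup_pos (mem_closedBall.mpr hy.le)]
    exact hy.ge

theorem stmt_12_general (n : ℕ) (Ω : Set (EuclideanSpace ℝ (Fin n)))
    (hconn : IsConnected Ω) (hbdd : Bornology.IsBounded Ω)
    (x : closure Ω)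
    (E : Submodule ℂ C(closure Ω, ℂ)) (hE : IsClosed (E : Set C(closure Ω, ℂ)))
    (α s t A C : ℝ)
    (hα1 : α < 1) (hs : 0 < s) (ht : 0 < t) (ht1 : t < 1)
    (hA : 0 < A) (hA1 : A < 1) (hC : 0 < C)
    (hyp : ∀ U : Set (closure Ω), U ∈ nhds x → (⨆ y ∈ U, dist y x) < 1 →
      ∃ f : C(closure Ω, ℂ), f ∈ E ∧
        f x = 1 ∧
        (∀ y : closure Ω, y ∉ U → ‖f y‖ ≤ α) ∧
        (∀ y ∈ U, ‖f y‖ ≤ C * (Real.log (1 / (⨆ z ∈ U, dist z x))) ^ t) ∧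
        (∀ ε : ℝ, 0 < ε → ε < 1 → ∀ y : closure Ω,
          dist y x < A * (⨆ z ∈ U, dist z x) * ε → ‖f y‖ < 1 + ε ^ s)) :
    ∃ F : C(closure Ω, ℂ), F ∈ E ∧ F x = 1 ∧
      ∀ y : closure Ω, y ≠ x → ‖F y‖ < 1 := by
  have : CompactSpace (closure Ω) := isCompact_iff_compactSpace.mp hbdd.isCompact_closure
  have : PreconnectedSpace (closure Ω) :=
    Subtype.preconnectedSpace hconn.isPreconnected.closure
  by_cases htriv : ∃ z : closure Ω, z ≠ x
  swap
  · obtain ⟨f, hfE, hfx, -⟩ := hyp (closedBall x (1 / 2)) (closedBall_mem_nhds x (by norm_num))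
      ((iSup_dist_closedBall_le x (by norm_num)).trans_lt (by norm_num))
    exact ⟨f, hfE, hfx, fun y hy => (htriv ⟨y, hy⟩).elim⟩
  obtain ⟨z, hz⟩ := htriv
  refine exists_peak_of_closedBall_family hE hα1 hs ht.le ht1 hA hA1 hC.le
    (lt_min (dist_pos.mpr hz) one_half_pos) ((min_le_right _ _).trans one_half_lt_one.le)
    fun r hr hrρ => ?_
  have hsup := iSup_dist_closedBall_eq hr.le (hrρ.trans (min_le_left _ _))
  obtain ⟨f, hfE, hfx, hfar, hmid, hnear⟩ := hyp _ (closedBall_mem_nhds x hr)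
    (by rw [hsup]; linarith [min_le_right (dist z x) (1 / 2)])
  rw [hsup] at hmid hnear
  exact ⟨f, hfE, hfx, fun y hy => hfar y fun hy' => hy.not_ge (mem_closedBall.mp hy'),
    fun y hy => hmid y (mem_closedBall.mpr hy), hnear⟩

theorem stmt_12 (n : ℕ) (Ω : Set (EuclideanSpace ℝ (Fin n)))
    (hopen : IsOpen Ω) (hconn : IsConnected Ω) (hbdd : Bornology.IsBounded Ω)
    (x : closure Ω)
    (E : Submodule ℂ C(closure Ω, ℂ)) (hE : IsClosed (E : Set C(closure Ω, ℂ)))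
    (α s t A C : ℝ)
    (hα : 0 < α) (hα1 : α < 1) (hs : 0 < s) (hs1 : s ≤ 1) (ht : 0 < t) (ht1 : t < 1)
    (hA : 0 < A) (hA1 : A < 1) (hC : 0 < C)
    (hyp : ∀ U : Set (closure Ω), U ∈ nhds x → (⨆ y ∈ U, dist y x) < 1 →
      ∃ f : C(closure Ω, ℂ), f ∈ E ∧
        f x = 1 ∧
        (∀ y : closure Ω, y ∉ U → ‖f y‖ ≤ α) ∧
        (∀ y ∈ U, ‖f y‖ ≤ C * (Real.log (1 / (⨆ z ∈ U, dist z x))) ^ t) ∧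
        (∀ ε : ℝ, 0 < ε → ε < 1 → ∀ y : closure Ω,
          dist y x < A * (⨆ z ∈ U, dist z x) * ε → ‖f y‖ < 1 + ε ^ s)) :
    ∃ F : C(closure Ω, ℂ), F ∈ E ∧ F x = 1 ∧
      ∀ y : closure Ω, y ≠ x → ‖F y‖ < 1 :=
  stmt_12_general n Ω hconn hbdd x E hE α s t A C hα1 hs ht ht1 hA hA1 hC hyp
end

section
/- Fix t ∈ (1/2,1), s ∈ (0,1], α ∈ (0,1), A ∈ (0,1). Then there exists M ≥ 1 such that, with p = M(1−t)/(1+Mt), for all integers m ≥ 3: exp(−((1+Mt)/(1−t)) · ((1−α)/(2M)) · [(m+1)^{p/M} − 2^{p/M}]) ≥ exp(−log(1/A) · (s(1+Mt)/(M(1−t))) · [(m−1)^p − 1]). -/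
open Real

theorem stmt_15 (t s α A : ℝ)
    (ht : 1 / 2 < t) (ht1 : t < 1) (hs : 0 < s) (hs1 : s ≤ 1)
    (hα : 0 < α) (hα1 : α < 1) (hA : 0 < A) (hA1 : A < 1) :
    ∃ M : ℝ, 1 ≤ M ∧ ∀ m : ℕ, 3 ≤ m →
      Real.exp (-(Real.log (1 / A) * (s * (1 + M * t) / (M * (1 - t))) *
          (((m:ℝ) - 1) ^ (M * (1 - t) / (1 + M * t)) - 1)))
        ≤ Real.exp (-((1 + M * t) / (1 - t) * ((1 - α) / (2 * M)) *
          (((m:ℝ) + 1) ^ ((M * (1 - t) / (1 + M * t)) / M)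
            - 2 ^ ((M * (1 - t) / (1 + M * t)) / M)))) := by
  have hL : 0 < Real.log (1 / A) := by
    apply Real.log_pos
    rw [lt_div_iff₀ hA]; linarith
  set M : ℝ := max 2 (1 / (s * Real.log (1 / A))) with hMdef
  have hM2 : (2:ℝ) ≤ M := le_max_left _ _
  have hM0 : 0 < M := by linarith
  have hsl : 0 < s * Real.log (1 / A) := mul_pos hs hL
  have hMinv : 1 / M ≤ s * Real.log (1 / A) := by
    rw [div_le_iff₀ hM0]
    have h1 : 1 / (s * Real.log (1 / A)) ≤ M := le_max_right _ _
    calc (1:ℝ) = (s * Real.log (1 / A)) * (1 / (s * Real.log (1 / A))) := by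
            field_simp
      _ ≤ (s * Real.log (1 / A)) * M := mul_le_mul_of_nonneg_left h1 hsl.le
  refine ⟨M, by linarith, fun m hm => ?_⟩
  have ht0 : 0 < t := by linarith
  have h1t : 0 < 1 - t := by linarith
  have h1Mt : 0 < 1 + M * t := by nlinarith
  set p : ℝ := M * (1 - t) / (1 + M * t) with hpdef
  have hp0 : 0 < p := div_pos (mul_pos hM0 h1t) h1Mt
  have hmR : (3:ℝ) ≤ (m:ℝ) := by exact_mod_cast hm
  set x : ℝ := (m:ℝ) - 1 with hxdef
  have hx1 : (1:ℝ) ≤ x := by simp only [hxdef]; linarith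
  have hx0 : (0:ℝ) ≤ x := by linarith
  -- E := x^p - 1 ≥ 0
  have hE1 : (1:ℝ) ≤ x ^ p := Real.one_le_rpow hx1 hp0.le
  set E : ℝ := x ^ p - 1 with hEdef
  have hE0 : 0 ≤ E := by simp only [hEdef]; linarith
  -- Step a: 1 ≤ 2^(p/M)
  have h2pm : (1:ℝ) ≤ (2:ℝ) ^ (p / M) :=
    Real.one_le_rpow one_le_two (div_nonneg hp0.le hM0.le)
  -- Step b: (m+1)^(p/M) ≤ (x^2)^(p/M)
  have hb : ((m:ℝ) + 1) ^ (p / M) ≤ (x ^ 2) ^ (p / M) := by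
    apply Real.rpow_le_rpow (by linarith) _ (div_nonneg hp0.le hM0.le)
    simp only [hxdef]; nlinarith
  -- rewrite (x^2)^(p/M) = (x^p)^(2/M)
  have hrw : (x ^ 2) ^ (p / M) = (x ^ p) ^ (2 / M) := by
    rw [← Real.rpow_natCast x 2, ← Real.rpow_mul hx0, ← Real.rpow_mul hx0]
    congr 1
    push_cast
    ring
  -- Step c: Bernoulli
  have hc : (x ^ p) ^ (2 / M) ≤ 1 + (2 / M) * E := by
    have hber := rpow_one_add_le_one_add_mul_self (s := E)
      (by linarith) (p := 2 / M) (div_nonneg (by norm_num) hM0.le)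
      (by rw [div_le_one hM0]; linarith)
    have : (1 : ℝ) + E = x ^ p := by simp [hEdef]
    rwa [this] at hber
  have hD : ((m:ℝ) + 1) ^ (p / M) - (2:ℝ) ^ (p / M) ≤ (2 / M) * E := by
    have := hb.trans_eq hrw
    linarith [hc]
  -- combine coefficients
  rw [Real.exp_le_exp, neg_le_neg_iff]
  have hK : 0 < (1 + M * t) / (M * (1 - t)) := div_pos h1Mt (mul_pos hM0 h1t)
  have hkey : (1 - α) / 2 * (((m:ℝ) + 1) ^ (p / M) - (2:ℝ) ^ (p / M))
      ≤ s * Real.log (1 / A) * E := by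
    have h1 : (1 - α) / 2 * (((m:ℝ) + 1) ^ (p / M) - (2:ℝ) ^ (p / M))
        ≤ (1 - α) / 2 * ((2 / M) * E) :=
      mul_le_mul_of_nonneg_left hD (by linarith)
    have h2 : (1 - α) / 2 * ((2 / M) * E) ≤ (1 / M) * E := by
      have : (1 - α) / 2 * ((2 / M) * E) = (1 - α) * ((1 / M) * E) := by ring
      rw [this]
      nlinarith [mul_nonneg (le_of_lt (show (0:ℝ) < 1 / M from by positivity)) hE0]
    have h3 : (1 / M) * E ≤ s * Real.log (1 / A) * E :=
      mul_le_mul_of_nonneg_right hMinv hE0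
    linarith
  have hrearr : (1 + M * t) / (1 - t) * ((1 - α) / (2 * M)) *
        (((m:ℝ) + 1) ^ (p / M) - (2:ℝ) ^ (p / M))
      = (1 + M * t) / (M * (1 - t)) *
        ((1 - α) / 2 * (((m:ℝ) + 1) ^ (p / M) - (2:ℝ) ^ (p / M))) := by
    field_simp
  have hrearr2 : Real.log (1 / A) * (s * (1 + M * t) / (M * (1 - t))) * E
      = (1 + M * t) / (M * (1 - t)) * (s * Real.log (1 / A) * E) := by
    field_simp
  calc (1 + M * t) / (1 - t) * ((1 - α) / (2 * M)) *
        (((m:ℝ) + 1) ^ (p / M) - (2:ℝ) ^ (p / M))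
      = (1 + M * t) / (M * (1 - t)) *
        ((1 - α) / 2 * (((m:ℝ) + 1) ^ (p / M) - (2:ℝ) ^ (p / M))) := hrearr
    _ ≤ (1 + M * t) / (M * (1 - t)) * (s * Real.log (1 / A) * E) :=
        mul_le_mul_of_nonneg_left hkey hK.le
    _ = Real.log (1 / A) * (s * (1 + M * t) / (M * (1 - t))) * E := hrearr2.symm
end
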